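/- arXiv:1708.00591 — 2 statements merged into one kernel-verified Lean document; each statement's English description precedes it below -/
import Mathlib

section
/- Assume μ > 0 and 3λ + 2μ > 0 and let ω = (ω₁, ω₂, 0) be a unit vector. Then the vector q₂⁺ := (ω₁, ω₂, i, −2iμω₁, −2iμω₂, 2μ) ∈ ℂ⁶ satisfies K⁰ q₂⁺ = i q₂⁺, and its componentwise complex conjugate q₂⁻ satisfies K⁰ q₂⁻ = −i q₂⁻. -/
/-!
Put `ξ = ω + i e₃ = (ω₁, ω₂, i)`; since `|ω| = 1`, `ξ` is isotropic: `ξ ⬝ ξ = 0`. In closed form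
`⟨η, ζ⟩ = λ η ζᵀ + μ ζ ηᵀ + μ (η ⬝ ζ) I`, hence `⟨η, ξ⟩ ξ = 2μ (η ⬝ ξ) ξ`. A solution `a` of
`⟨ω + p e₃, ω + p e₃⟩ a = (M₂ + p M₁ + p² M₀) a = 0` gives the eigenvector `(a, -(⟨e₃, ω⟩ + p M₀) a)`
of `K⁰` for the eigenvalue `p`. For `p = i` and `a = ξ` the equation holds because `⟨ξ, ξ⟩ ξ = 0`,
and the second half is `-⟨e₃, ξ⟩ ξ = -2iμ ξ`. As `K⁰` is real, conjugation gives the claim for `q₂⁻`.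
-/

open Matrix

noncomputable section

/-- Isotropic elasticity tensor `C_{ijkl} = λ δ_{ij} δ_{kl} + μ (δ_{ik} δ_{jl} + δ_{il} δ_{jk})`. -/
def isoC (lam mu : ℝ) (i j k l : Fin 3) : ℝ :=
  lam * (if i = j then (1:ℝ) else 0) * (if k = l then (1:ℝ) else 0)
    + mu * ((if i = k then (1:ℝ) else 0) * (if j = l then (1:ℝ) else 0)
      + (if i = l then (1:ℝ) else 0) * (if j = k then (1:ℝ) else 0))

/-- The matrix `⟨ξ,ζ⟩` with entries `⟨ξ,ζ⟩_{ik} = Σ_{j,l} C_{ijkl} ξ_j ζ_l`. -/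
def bil (lam mu : ℝ) (ξ ζ : Fin 3 → ℝ) : Matrix (Fin 3) (Fin 3) ℝ :=
  Matrix.of fun i k => ∑ j, ∑ l, isoC lam mu i j k l * ξ j * ζ l

/-- `M₀ = ⟨e₃,e₃⟩`. -/
def Mat0 (lam mu : ℝ) : Matrix (Fin 3) (Fin 3) ℝ := bil lam mu ![0,0,1] ![0,0,1]

/-- `M₁ = ⟨e₃,ω⟩ + ⟨ω,e₃⟩` for `ω = (ω₁,ω₂,0)`. -/
def Mat1 (lam mu ω1 ω2 : ℝ) : Matrix (Fin 3) (Fin 3) ℝ :=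
  bil lam mu ![0,0,1] ![ω1,ω2,0] + bil lam mu ![ω1,ω2,0] ![0,0,1]

/-- `M₂ = ⟨ω,ω⟩`. -/
def Mat2 (lam mu ω1 ω2 : ℝ) : Matrix (Fin 3) (Fin 3) ℝ :=
  bil lam mu ![ω1,ω2,0] ![ω1,ω2,0]

/-- `⟨e₃,ω⟩`. -/
def E3w (lam mu ω1 ω2 : ℝ) : Matrix (Fin 3) (Fin 3) ℝ := bil lam mu ![0,0,1] ![ω1,ω2,0]

/-- `⟨ω,e₃⟩`. -/
def wE3 (lam mu ω1 ω2 : ℝ) : Matrix (Fin 3) (Fin 3) ℝ := bil lam mu ![ω1,ω2,0] ![0,0,1]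

/-- The 6×6 Stroh matrix
`K⁰ = [[−M₀⁻¹⟨e₃,ω⟩, −M₀⁻¹], [M₂ − ⟨ω,e₃⟩M₀⁻¹⟨e₃,ω⟩, −⟨ω,e₃⟩M₀⁻¹]]`. -/
def Stroh (lam mu ω1 ω2 : ℝ) : Matrix (Fin 6) (Fin 6) ℝ :=
  Matrix.reindex finSumFinEquiv finSumFinEquiv
    (Matrix.fromBlocks
      (-((Mat0 lam mu)⁻¹ * E3w lam mu ω1 ω2)) (-(Mat0 lam mu)⁻¹)
      (Mat2 lam mu ω1 ω2 - wE3 lam mu ω1 ω2 * (Mat0 lam mu)⁻¹ * E3w lam mu ω1 ω2)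
      (-(wE3 lam mu ω1 ω2 * (Mat0 lam mu)⁻¹)))

/-- Complex versions (real matrices regarded as complex matrices). -/
def Mat0c (lam mu : ℝ) : Matrix (Fin 3) (Fin 3) ℂ := (Mat0 lam mu).map Complex.ofReal

def Mat1c (lam mu ω1 ω2 : ℝ) : Matrix (Fin 3) (Fin 3) ℂ := (Mat1 lam mu ω1 ω2).map Complex.ofReal

def Mat2c (lam mu ω1 ω2 : ℝ) : Matrix (Fin 3) (Fin 3) ℂ := (Mat2 lam mu ω1 ω2).map Complex.ofReal

def E3wc (lam mu ω1 ω2 : ℝ) : Matrix (Fin 3) (Fin 3) ℂ := (E3w lam mu ω1 ω2).map Complex.ofReal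

def Strohc (lam mu ω1 ω2 : ℝ) : Matrix (Fin 6) (Fin 6) ℂ := (Stroh lam mu ω1 ω2).map Complex.ofReal

end

namespace Matrix

variable {m n R S : Type*} [Fintype n] [CommRing R] [CommRing S]

lemma reindex_mulVec_eq_smul [Fintype m] (e : m ≃ n) (M : Matrix m m R) (v : n → R) (p : R)
    (h : M *ᵥ (v ∘ e) = p • (v ∘ e)) : reindex e e M *ᵥ v = p • v := by
  ext i
  simpa [reindex_apply, submatrix_mulVec_equiv] using congr_fun h (e.symm i)

variable [DecidableEq n]

lemma map_nonsing_inv (f : R →+* S) {M : Matrix n n R} (hM : IsUnit M.det) :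
    M⁻¹.map f = (M.map f)⁻¹ :=
  (inv_eq_left_inv <| by
    rw [← Matrix.map_mul, nonsing_inv_mul M hM, Matrix.map_one _ f.map_zero f.map_one]).symm

def isotropicForm (lam mu : R) (ξ ζ : n → R) : Matrix n n R :=
  lam • vecMulVec ξ ζ + mu • vecMulVec ζ ξ + (mu * (ξ ⬝ᵥ ζ)) • 1

lemma isotropicForm_map (f : R →+* S) (lam mu : R) (ξ ζ : n → R) :
    (isotropicForm lam mu ξ ζ).map f = isotropicForm (f lam) (f mu) (f ∘ ξ) (f ∘ ζ) := by
  ext i k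
  by_cases h : i = k <;> simp [isotropicForm, vecMulVec_apply, h, RingHom.map_dotProduct]

lemma isotropicForm_add_smul_right (lam mu : R) (η ξ ζ : n → R) (p : R) :
    isotropicForm lam mu η (ξ + p • ζ)
      = isotropicForm lam mu η ξ + p • isotropicForm lam mu η ζ := by
  ext i k
  simp [isotropicForm, vecMulVec_apply, dotProduct_add]
  ring

lemma isotropicForm_add_smul_self (lam mu : R) (ξ η : n → R) (p : R) :
    isotropicForm lam mu (ξ + p • η) (ξ + p • η)
      = isotropicForm lam mu ξ ξ + p • (isotropicForm lam mu ξ η + isotropicForm lam mu η ξ)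
        + p ^ 2 • isotropicForm lam mu η η := by
  ext i k
  simp [isotropicForm, vecMulVec_apply, dotProduct_add, add_dotProduct, dotProduct_comm η ξ]
  ring

lemma isotropicForm_mulVec_of_dotProduct_self (lam mu : R) (η ξ : n → R)
    (hξ : ξ ⬝ᵥ ξ = 0) :
    isotropicForm lam mu η ξ *ᵥ ξ = (2 * mu * (η ⬝ᵥ ξ)) • ξ := by
  ext i
  simp [isotropicForm, add_mulVec, smul_mulVec, vecMulVec_mulVec, hξ]
  ring

lemma fromBlocks_stroh_mulVec_eq_smul (M₀ E W M₂ : Matrix n n R) (hM₀ : IsUnit M₀.det)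
    (p : R) (a b : n → R) (ha : (M₂ + p • (W + E) + p ^ 2 • M₀) *ᵥ a = 0)
    (hb : b = -((E + p • M₀) *ᵥ a)) :
    fromBlocks (-(M₀⁻¹ * E)) (-M₀⁻¹) (M₂ - W * M₀⁻¹ * E) (-(W * M₀⁻¹)) *ᵥ Sum.elim a b
      = p • Sum.elim a b := by
  subst hb
  have hinv : M₀⁻¹ * M₀ = 1 := nonsing_inv_mul M₀ hM₀
  have htop : -(M₀⁻¹ * E) + M₀⁻¹ * (E + p • M₀) = p • 1 := by
    rw [mul_add, mul_smul_comm, hinv]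
    abel
  have hbot : M₂ - W * M₀⁻¹ * E + W * M₀⁻¹ * (E + p • M₀)
      = (M₂ + p • (W + E) + p ^ 2 • M₀) - p • (E + p • M₀) := by
    rw [mul_add, mul_smul_comm, Matrix.mul_assoc W M₀⁻¹ M₀, hinv, Matrix.mul_one]
    module
  have hsplit : p • Sum.elim a (-((E + p • M₀) *ᵥ a))
      = Sum.elim (p • a) (p • -((E + p • M₀) *ᵥ a)) := by
    ext (i | i) <;> rfl
  rw [fromBlocks_mulVec, hsplit, Sum.elim_comp_inl, Sum.elim_comp_inr]
  congr 1
  · calc _ = (-(M₀⁻¹ * E) + M₀⁻¹ * (E + p • M₀)) *ᵥ a := by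
          simp only [add_mulVec, ← mulVec_mulVec, mulVec_neg, neg_mulVec, neg_neg]
      _ = p • a := by rw [htop, smul_mulVec, one_mulVec]
  · calc _ = (M₂ - W * M₀⁻¹ * E + W * M₀⁻¹ * (E + p • M₀)) *ᵥ a := by
          simp only [add_mulVec, ← mulVec_mulVec, mulVec_neg, neg_mulVec, neg_neg]
      _ = p • -((E + p • M₀) *ᵥ a) := by
        rw [hbot, sub_mulVec, ha, smul_mulVec, zero_sub, smul_neg]

end Matrix

open Complex

lemma bil_eq_isotropicForm (lam mu : ℝ) (ξ ζ : Fin 3 → ℝ) :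
    bil lam mu ξ ζ = isotropicForm lam mu ξ ζ := by
  ext i k
  fin_cases i <;> fin_cases k <;>
    simp [bil, isoC, isotropicForm, Fin.sum_univ_three, vecMulVec_apply, dotProduct] <;> ring

lemma bil_map_ofReal (lam mu : ℝ) (ξ ζ : Fin 3 → ℝ) :
    (bil lam mu ξ ζ).map ofReal
      = isotropicForm (lam : ℂ) mu (ofReal ∘ ξ) (ofReal ∘ ζ) := by
  rw [bil_eq_isotropicForm]
  exact isotropicForm_map ofRealHom lam mu ξ ζ

lemma isUnit_det_Mat0 {lam mu : ℝ} (hmu : 0 < mu) (hconv : 0 < 3 * lam + 2 * mu) :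
    IsUnit (Mat0 lam mu).det := by
  have hdiag : Mat0 lam mu = diagonal ![mu, mu, lam + 2 * mu] := by
    ext i k
    fin_cases i <;> fin_cases k <;> simp [Mat0, bil, isoC, Fin.sum_univ_three]; ring
  rw [isUnit_iff_ne_zero, hdiag, det_diagonal, Fin.prod_univ_three]
  have : 0 < lam + 2 * mu := by linarith
  exact mul_ne_zero (mul_ne_zero hmu.ne' hmu.ne') this.ne'

lemma Strohc_eq_reindex_fromBlocks {lam mu : ℝ} (ω1 ω2 : ℝ)
    (hM₀ : IsUnit (Mat0 lam mu).det) :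
    Strohc lam mu ω1 ω2 = reindex finSumFinEquiv finSumFinEquiv
      (fromBlocks (-((Mat0c lam mu)⁻¹ * E3wc lam mu ω1 ω2)) (-(Mat0c lam mu)⁻¹)
        (Mat2c lam mu ω1 ω2
          - (wE3 lam mu ω1 ω2).map ofReal * (Mat0c lam mu)⁻¹ * E3wc lam mu ω1 ω2)
        (-((wE3 lam mu ω1 ω2).map ofReal * (Mat0c lam mu)⁻¹))) := by
  have hinv : (Mat0 lam mu)⁻¹.map ofReal = (Mat0c lam mu)⁻¹ := map_nonsing_inv ofRealHom hM₀
  have hmul (A B : Matrix (Fin 3) (Fin 3) ℝ) : (A * B).map ofReal = A.map ofReal * B.map ofReal :=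
    Matrix.map_mul (f := ofRealHom)
  rw [← hinv]
  simp only [Strohc, Stroh, Mat2c, E3wc, reindex_apply, ← submatrix_map, fromBlocks_map, hmul,
    Matrix.map_sub _ ofReal_sub, Matrix.map_neg _ ofReal_neg]

lemma map_ofReal_mulVec_conj {m : Type*} [Fintype m] (M : Matrix m m ℝ) (v : m → ℂ) (p : ℂ)
    (h : M.map ofReal *ᵥ v = p • v) :
    M.map ofReal *ᵥ (fun j => starRingEnd ℂ (v j))
      = starRingEnd ℂ p • fun j => starRingEnd ℂ (v j) := by
  ext i
  have := congr_arg (starRingEnd ℂ) (congr_fun h i)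
  rw [RingHom.map_mulVec] at this
  simpa [Matrix.map_map, Function.comp_def] using this

lemma stroh_q₂_comp_finSumFinEquiv (mu ω1 ω2 : ℝ) :
    ![(ω1 : ℂ), ω2, I, -(2 * I * mu * ω1), -(2 * I * mu * ω2), 2 * (mu : ℂ)] ∘ finSumFinEquiv
      = Sum.elim ![(ω1 : ℂ), ω2, I] (-((2 * mu * I) • ![(ω1 : ℂ), ω2, I])) := by
  have htraction : ![-(2 * I * mu * ω1), -(2 * I * mu * ω2), 2 * (mu : ℂ)]
      = -((2 * mu * I) • ![(ω1 : ℂ), ω2, I]) := by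
    ext i
    fin_cases i <;>
      simp only [Fin.isValue, Fin.zero_eta, Fin.mk_one, Fin.reduceFinMk, cons_val_zero,
        cons_val_one, cons_val_two, vecHead, vecTail, Function.comp_apply, Fin.succ_zero_eq_one,
        Pi.neg_apply, Pi.smul_apply, smul_eq_mul]
    · ring
    · ring
    · linear_combination (2 * (mu : ℂ)) * I_sq
  rw [← htraction]
  ext (i | i) <;> fin_cases i <;> rfl

lemma Strohc_mulVec_eq_I_smul {lam mu : ℝ} (ω1 ω2 : ℝ) (hM₀ : IsUnit (Mat0 lam mu).det)
    (hω : ω1 ^ 2 + ω2 ^ 2 = 1) :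
    Strohc lam mu ω1 ω2 *ᵥ ![(ω1 : ℂ), ω2, I, -(2 * I * mu * ω1), -(2 * I * mu * ω2), 2 * (mu : ℂ)]
      = I • ![(ω1 : ℂ), ω2, I, -(2 * I * mu * ω1), -(2 * I * mu * ω2), 2 * (mu : ℂ)] := by
  set ω : Fin 3 → ℂ := ofReal ∘ ![ω1, ω2, 0]
  set e₃ : Fin 3 → ℂ := ofReal ∘ ![0, 0, 1]
  have hξ : ω + I • e₃ = ![(ω1 : ℂ), ω2, I] := by
    ext i; fin_cases i <;> simp [ω, e₃]
  have hξξ : (ω + I • e₃) ⬝ᵥ (ω + I • e₃) = 0 := by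
    rw [hξ]
    have hωc : (ω1 : ℂ) ^ 2 + ω2 ^ 2 = 1 := by exact_mod_cast hω
    simp [dotProduct, Fin.sum_univ_three]
    linear_combination hωc
  have he₃ξ : e₃ ⬝ᵥ (ω + I • e₃) = I := by
    rw [hξ]
    simp [e₃, dotProduct, Fin.sum_univ_three]
  rw [Strohc_eq_reindex_fromBlocks ω1 ω2 hM₀]
  apply reindex_mulVec_eq_smul
  rw [stroh_q₂_comp_finSumFinEquiv, ← hξ]
  apply fromBlocks_stroh_mulVec_eq_smul
  · have := hM₀.map ofRealHom
    rwa [RingHom.map_det] at this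
  · simp only [Mat0c, Mat2c, E3wc, Mat0, Mat2, E3w, wE3, bil_map_ofReal]
    rw [← isotropicForm_add_smul_self, isotropicForm_mulVec_of_dotProduct_self _ _ _ _ hξξ,
      hξξ, mul_zero, zero_smul]
  · simp only [Mat0c, E3wc, Mat0, E3w, bil_map_ofReal]
    rw [← isotropicForm_add_smul_right,
      isotropicForm_mulVec_of_dotProduct_self _ _ _ _ hξξ, he₃ξ]

/-- The vector `q₂⁺ = (ω₁, ω₂, i, −2iμω₁, −2iμω₂, 2μ)` is an eigenvector of the Stroh
matrix `K⁰` for the eigenvalue `i`, and its componentwise complex conjugate `q₂⁻` is an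
eigenvector for the eigenvalue `−i`. -/
theorem stmt3 (lam mu ω1 ω2 : ℝ) (hmu : 0 < mu) (hconv : 0 < 3 * lam + 2 * mu)
    (hω : ω1 ^ 2 + ω2 ^ 2 = 1) :
    Strohc lam mu ω1 ω2 *ᵥ
        (![(ω1 : ℂ), (ω2 : ℂ), Complex.I, -(2 * Complex.I * mu * ω1),
            -(2 * Complex.I * mu * ω2), 2 * (mu : ℂ)] : Fin 6 → ℂ)
      = Complex.I •
        (![(ω1 : ℂ), (ω2 : ℂ), Complex.I, -(2 * Complex.I * mu * ω1),
            -(2 * Complex.I * mu * ω2), 2 * (mu : ℂ)] : Fin 6 → ℂ) ∧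
    Strohc lam mu ω1 ω2 *ᵥ
        (fun j => starRingEnd ℂ
          ((![(ω1 : ℂ), (ω2 : ℂ), Complex.I, -(2 * Complex.I * mu * ω1),
              -(2 * Complex.I * mu * ω2), 2 * (mu : ℂ)] : Fin 6 → ℂ) j))
      = (-Complex.I) •
        (fun j => starRingEnd ℂ
          ((![(ω1 : ℂ), (ω2 : ℂ), Complex.I, -(2 * Complex.I * mu * ω1),
              -(2 * Complex.I * mu * ω2), 2 * (mu : ℂ)] : Fin 6 → ℂ) j)) := by
  have h := Strohc_mulVec_eq_I_smul ω1 ω2 (isUnit_det_Mat0 hmu hconv) hω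
  refine ⟨h, ?_⟩
  rw [← conj_I]
  exact map_ofReal_mulVec_conj _ _ _ h
end

section
/- Let λ, μ ∈ ℝ satisfy μ > 0 and 3λ + 2μ > 0, and let ω = (ω₁, ω₂, 0) be a unit vector. Then det(2M₀ − iM₁) = 2μ(4μ(λ+2μ) + (λ+μ)²) ≠ 0. Consequently, for every integer d ≥ 1 the matrix R₁^d := d(2M₀ − iM₁) is invertible, and for every integer d ≥ 2 the matrix R₂^d := −d(d−1)M₀ is invertible. -/
open Matrix

/-! `M₀ = diag(μ, μ, λ+2μ)` and `M₁ = (λ+μ)(e₃ωᵀ + ωe₃ᵀ)`, so `det(2M₀ − iM₁)` is an explicit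
`3 × 3` determinant in which `ω` enters only through `ω₁² + ω₂² = 1`. Positivity of both
determinants comes from `λ + 2μ = (3λ + 2μ)/3 + 4μ/3 > 0`. -/

lemma Matrix.isUnit_smul_of_ne_zero {K n : Type*} [Field K] [Fintype n] [DecidableEq n]
    {c : K} (hc : c ≠ 0) {A : Matrix n n K} (hA : IsUnit A) : IsUnit (c • A) :=
  hA.smul (Units.mk0 c hc)

lemma Mat0_eq (lam mu : ℝ) : Mat0 lam mu = diagonal ![mu, mu, lam + 2 * mu] := by
  ext i k
  fin_cases i <;> fin_cases k <;> simp [Mat0, bil, isoC, Fin.sum_univ_three, ← two_mul, mul_comm]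

lemma Mat1_eq (lam mu ω1 ω2 : ℝ) :
    Mat1 lam mu ω1 ω2 = (lam + mu) • !![0, 0, ω1; 0, 0, ω2; ω1, ω2, 0] := by
  ext i k
  fin_cases i <;> fin_cases k <;> simp [Mat1, bil, isoC, Fin.sum_univ_three] <;> ring

lemma isUnit_Mat0 {lam mu : ℝ} (hmu : mu ≠ 0) (hlam : lam + 2 * mu ≠ 0) :
    IsUnit (Mat0 lam mu) := by
  rw [isUnit_iff_isUnit_det, Mat0_eq, det_diagonal, Fin.prod_univ_three, isUnit_iff_ne_zero]
  exact mul_ne_zero (mul_ne_zero hmu hmu) hlam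

lemma isUnit_Mat0c {lam mu : ℝ} (hmu : mu ≠ 0) (hlam : lam + 2 * mu ≠ 0) :
    IsUnit (Mat0c lam mu) :=
  (isUnit_Mat0 hmu hlam).map Complex.ofRealHom.mapMatrix

lemma det_two_smul_Mat0c_sub_I_smul_Mat1c (lam mu ω1 ω2 : ℝ) (hω : ω1 ^ 2 + ω2 ^ 2 = 1) :
    ((2 : ℂ) • Mat0c lam mu - Complex.I • Mat1c lam mu ω1 ω2).det
      = ((2 * mu * (4 * mu * (lam + 2 * mu) + (lam + mu) ^ 2) : ℝ) : ℂ) := by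
  have hωc : (ω1 : ℂ) ^ 2 + (ω2 : ℂ) ^ 2 = 1 := by exact_mod_cast hω
  rw [Mat0c, Mat1c, Mat0_eq, Mat1_eq, det_fin_three]
  simp
  linear_combination (2 * (mu : ℂ) * (lam + mu) ^ 2) * hωc
    - (2 * (mu : ℂ) * (lam + mu) ^ 2 * ((ω1 : ℂ) ^ 2 + (ω2 : ℂ) ^ 2)) * Complex.I_sq

/-- `det(2M₀ − iM₁) = 2μ(4μ(λ+2μ) + (λ+μ)²) ≠ 0`; consequently `R₁^d = d(2M₀ − iM₁)` is
invertible for `d ≥ 1` and `R₂^d = −d(d−1)M₀` is invertible for `d ≥ 2`. -/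
theorem stmt8 (lam mu ω1 ω2 : ℝ) (hmu : 0 < mu) (hconv : 0 < 3 * lam + 2 * mu)
    (hω : ω1 ^ 2 + ω2 ^ 2 = 1) :
    Matrix.det ((2 : ℂ) • Mat0c lam mu - Complex.I • Mat1c lam mu ω1 ω2)
        = ((2 * mu * (4 * mu * (lam + 2 * mu) + (lam + mu) ^ 2) : ℝ) : ℂ) ∧
      ((2 * mu * (4 * mu * (lam + 2 * mu) + (lam + mu) ^ 2) : ℝ) : ℂ) ≠ 0 ∧
      (∀ d : ℕ, 1 ≤ d →
        IsUnit ((d : ℂ) • ((2 : ℂ) • Mat0c lam mu - Complex.I • Mat1c lam mu ω1 ω2))) ∧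
      (∀ d : ℕ, 2 ≤ d →
        IsUnit ((-((d : ℂ) * ((d : ℂ) - 1))) • Mat0c lam mu)) := by
  have hlam : 0 < lam + 2 * mu := by linarith
  have hdet := det_two_smul_Mat0c_sub_I_smul_Mat1c lam mu ω1 ω2 hω
  have hne : ((2 * mu * (4 * mu * (lam + 2 * mu) + (lam + mu) ^ 2) : ℝ) : ℂ) ≠ 0 := by
    have hquad :=
      add_pos_of_pos_of_nonneg (mul_pos (mul_pos four_pos hmu) hlam) (sq_nonneg (lam + mu))
    exact_mod_cast (mul_pos (mul_pos two_pos hmu) hquad).ne'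
  refine ⟨hdet, hne, fun d hd => ?_, fun d hd => ?_⟩
  · refine Matrix.isUnit_smul_of_ne_zero (by exact_mod_cast (by omega : d ≠ 0)) ?_
    rwa [isUnit_iff_isUnit_det, hdet, isUnit_iff_ne_zero]
  · have hd0 : (d : ℂ) ≠ 0 := by exact_mod_cast (by omega : d ≠ 0)
    have hd1 : (d : ℂ) - 1 ≠ 0 := sub_ne_zero.2 (by exact_mod_cast (by omega : d ≠ 1))
    exact Matrix.isUnit_smul_of_ne_zero (neg_ne_zero.2 (mul_ne_zero hd0 hd1))
      (isUnit_Mat0c hmu.ne' hlam.ne')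
end
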